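/- arXiv:2501.16099 — 2 statements merged into one kernel-verified Lean document; each statement's English description precedes it below -/
import Mathlib

section
/- Let K be a nonnegative integer and 0 < R₁ < R₂. For i ∈ {1,2}, let v_i : ℝ → ℝ be trigonometric polynomials of degree at most K, i.e. v_i(φ) = c_{0,i} + Σ_{k=1}^K (c_{k,i} cos(kφ) + s_{k,i} sin(kφ)) for real numbers c_{k,i}, s_{k,i}. Then there exist unique real coefficients α₀, α₀', α_k, α_k', β_k, β_k' (1 ≤ k ≤ K) such that the air-gap ansatz f with these coefficients satisfies f(R₁, φ) = v₁(φ) and f(R₂, φ) = v₂(φ) for all φ ∈ ℝ. -/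
open Real intervalIntegral

/-- The truncated air-gap ansatz in polar coordinates, with the k-th mode
coefficients indexed by `k : Fin K` (mode number `k + 1`). -/
noncomputable def airGapFin (K : ℕ) (a₀ a₀' : ℝ) (a a' b b' : Fin K → ℝ)
    (r φ : ℝ) : ℝ :=
  a₀ + a₀' * Real.log r
    + ∑ k : Fin K,
        Real.cos (((k : ℕ) + 1) * φ) *
          (a k * r ^ ((k : ℕ) + 1) + a' k * r ^ (-(((k : ℕ) + 1) : ℤ)))
    + ∑ k : Fin K,
        Real.sin (((k : ℕ) + 1) * φ) *
          (b k * r ^ ((k : ℕ) + 1) + b' k * r ^ (-(((k : ℕ) + 1) : ℤ)))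


lemma intCosZ (n : ℤ) : ∫ x in (0:ℝ)..(2*π), Real.cos (n*x) = if n = 0 then 2*π else 0 := by
  rcases eq_or_ne n 0 with h | h
  · simp [h]
  · have hn : (n:ℝ) ≠ 0 := Int.cast_ne_zero.mpr h
    rw [if_neg h]
    have := intervalIntegral.integral_comp_mul_left (fun x => Real.cos x) (c := (n:ℝ)) hn (a := 0) (b := 2*π)
    rw [this]
    rw [integral_cos]
    have : Real.sin ((n:ℝ) * (2*π)) = 0 := by
      have : ((n:ℝ) * (2*π)) = (2*n : ℤ) * π := by push_cast; ring
      rw [this, Real.sin_int_mul_pi]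
    simp [this]

lemma intSinZ (n : ℤ) : ∫ x in (0:ℝ)..(2*π), Real.sin (n*x) = 0 := by
  rcases eq_or_ne n 0 with h | h
  · simp [h]
  · have hn : (n:ℝ) ≠ 0 := Int.cast_ne_zero.mpr h
    have := intervalIntegral.integral_comp_mul_left (fun x => Real.sin x) (c := (n:ℝ)) hn (a := 0) (b := 2*π)
    rw [this, integral_sin]
    have : Real.cos ((n:ℝ) * (2*π)) = 1 := by
      have h2 : ((n:ℝ) * (2*π)) = (n:ℝ) * (2*π) := rfl
      exact_mod_cast Real.cos_int_mul_two_pi n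
    simp [this]

lemma intCCZ (a b : ℤ) : ∫ x in (0:ℝ)..(2*π), Real.cos (a*x) * Real.cos (b*x)
    = ((if a - b = 0 then 2*π else 0) + (if a + b = 0 then 2*π else 0))/2 := by
  have hpt : ∀ x : ℝ, Real.cos (a*x) * Real.cos (b*x)
      = (Real.cos (((a-b : ℤ))*x) + Real.cos (((a+b : ℤ))*x))/2 := by
    intro x
    push_cast
    rw [sub_mul, add_mul, Real.cos_sub, Real.cos_add]
    ring
  simp_rw [hpt]
  rw [intervalIntegral.integral_div, intervalIntegral.integral_add
    (Continuous.intervalIntegrable (by fun_prop) _ _)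
    (Continuous.intervalIntegrable (by fun_prop) _ _),
    intCosZ, intCosZ]

lemma intSCZ (a b : ℤ) : ∫ x in (0:ℝ)..(2*π), Real.sin (a*x) * Real.cos (b*x) = 0 := by
  have hpt : ∀ x : ℝ, Real.sin (a*x) * Real.cos (b*x)
      = (Real.sin (((a+b : ℤ))*x) + Real.sin (((a-b : ℤ))*x))/2 := by
    intro x
    push_cast
    rw [add_mul, sub_mul, Real.sin_add, Real.sin_sub]
    ring
  simp_rw [hpt]
  rw [intervalIntegral.integral_div, intervalIntegral.integral_add
    (Continuous.intervalIntegrable (by fun_prop) _ _)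
    (Continuous.intervalIntegrable (by fun_prop) _ _),
    intSinZ, intSinZ]
  norm_num

lemma intSSZ (a b : ℤ) : ∫ x in (0:ℝ)..(2*π), Real.sin (a*x) * Real.sin (b*x)
    = ((if a - b = 0 then 2*π else 0) - (if a + b = 0 then 2*π else 0))/2 := by
  have hpt : ∀ x : ℝ, Real.sin (a*x) * Real.sin (b*x)
      = (Real.cos (((a-b : ℤ))*x) - Real.cos (((a+b : ℤ))*x))/2 := by
    intro x
    push_cast
    rw [sub_mul, add_mul, Real.cos_sub, Real.cos_add]
    ring
  simp_rw [hpt]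
  rw [intervalIntegral.integral_div, intervalIntegral.integral_sub
    (Continuous.intervalIntegrable (by fun_prop) _ _)
    (Continuous.intervalIntegrable (by fun_prop) _ _),
    intCosZ, intCosZ]

lemma castfreq (k : ℕ) : ((k:ℝ)+1) = (((k+1:ℕ):ℤ):ℝ) := by push_cast; ring

lemma intCos1 (k : ℕ) : ∫ x in (0:ℝ)..(2*π), Real.cos (((k:ℝ)+1)*x) = 0 := by
  rw [castfreq, intCosZ, if_neg (by omega)]

lemma intSin1 (k : ℕ) : ∫ x in (0:ℝ)..(2*π), Real.sin (((k:ℝ)+1)*x) = 0 := by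
  rw [castfreq, intSinZ]

lemma intCC (k m : ℕ) : ∫ x in (0:ℝ)..(2*π),
    Real.cos (((k:ℝ)+1)*x) * Real.cos (((m:ℝ)+1)*x) = if k = m then π else 0 := by
  rw [castfreq k, castfreq m, intCCZ]
  have h2 : ¬(((k+1:ℕ):ℤ) + ((m+1:ℕ):ℤ) = 0) := by omega
  have h1 : ((((k+1:ℕ):ℤ) - ((m+1:ℕ):ℤ)) = 0) ↔ k = m := by omega
  simp only [if_neg h2, h1]
  split_ifs <;> ring

lemma intSS (k m : ℕ) : ∫ x in (0:ℝ)..(2*π),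
    Real.sin (((k:ℝ)+1)*x) * Real.sin (((m:ℝ)+1)*x) = if k = m then π else 0 := by
  rw [castfreq k, castfreq m, intSSZ]
  have h2 : ¬(((k+1:ℕ):ℤ) + ((m+1:ℕ):ℤ) = 0) := by omega
  have h1 : ((((k+1:ℕ):ℤ) - ((m+1:ℕ):ℤ)) = 0) ↔ k = m := by omega
  simp only [if_neg h2, h1]
  split_ifs <;> ring

lemma intSC (k m : ℕ) : ∫ x in (0:ℝ)..(2*π),
    Real.sin (((k:ℝ)+1)*x) * Real.cos (((m:ℝ)+1)*x) = 0 := by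
  rw [castfreq k, castfreq m, intSCZ]

lemma trig_zero {K : ℕ} (A₀ : ℝ) (A B : Fin K → ℝ)
    (h : ∀ φ : ℝ, A₀ + ∑ k : Fin K,
      (A k * Real.cos (((k:ℕ)+1)*φ) + B k * Real.sin (((k:ℕ)+1)*φ)) = 0) :
    A₀ = 0 ∧ ∀ k, A k = 0 ∧ B k = 0 := by
  have hint : ∀ (f : ℝ → ℝ), Continuous f → IntervalIntegrable f MeasureTheory.volume 0 (2*π) :=
    fun f hf => hf.intervalIntegrable _ _
  have hA0 : A₀ = 0 := by
    have h0 : ∫ x in (0:ℝ)..(2*π), (A₀ + ∑ k : Fin K,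
        (A k * Real.cos (((k:ℕ)+1)*x) + B k * Real.sin (((k:ℕ)+1)*x))) = 0 := by
      simp_rw [h]; simp
    rw [intervalIntegral.integral_add (hint _ continuous_const)
      (hint _ (by fun_prop)), intervalIntegral.integral_finset_sum
      (fun k _ => hint _ (by fun_prop))] at h0
    simp only [intervalIntegral.integral_const, smul_eq_mul] at h0
    have hterm : ∀ k : Fin K, (∫ x in (0:ℝ)..(2*π),
        (A k * Real.cos (((k:ℕ)+1)*x) + B k * Real.sin (((k:ℕ)+1)*x))) = 0 := by
      intro k
      rw [intervalIntegral.integral_add (hint _ (by fun_prop)) (hint _ (by fun_prop)),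
        intervalIntegral.integral_const_mul, intervalIntegral.integral_const_mul,
        intCos1, intSin1]
      ring
    rw [Finset.sum_congr rfl (fun k _ => hterm k)] at h0
    simp at h0
    rcases h0 with h0 | h0
    · linarith [Real.pi_pos]
  refine ⟨hA0, fun m => ⟨?_, ?_⟩⟩
  · have h0 : ∫ x in (0:ℝ)..(2*π), ((A₀ + ∑ k : Fin K,
        (A k * Real.cos (((k:ℕ)+1)*x) + B k * Real.sin (((k:ℕ)+1)*x)))
          * Real.cos (((m:ℕ)+1)*x)) = 0 := by
      simp_rw [h]; simp
    have hpt : ∀ x : ℝ, ((A₀ + ∑ k : Fin K,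
        (A k * Real.cos (((k:ℕ)+1)*x) + B k * Real.sin (((k:ℕ)+1)*x)))
          * Real.cos (((m:ℕ)+1)*x))
        = A₀ * Real.cos (((m:ℕ)+1)*x) + ∑ k : Fin K,
          (A k * (Real.cos (((k:ℕ)+1)*x) * Real.cos (((m:ℕ)+1)*x))
            + B k * (Real.sin (((k:ℕ)+1)*x) * Real.cos (((m:ℕ)+1)*x))) := by
      intro x
      rw [add_mul, Finset.sum_mul]
      congr 1
      refine Finset.sum_congr rfl (fun k _ => by ring)
    simp_rw [hpt] at h0
    rw [intervalIntegral.integral_add (hint _ (by fun_prop)) (hint _ (by fun_prop)),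
      intervalIntegral.integral_finset_sum (fun k _ => hint _ (by fun_prop))] at h0
    have hterm : ∀ k : Fin K, (∫ x in (0:ℝ)..(2*π),
        (A k * (Real.cos (((k:ℕ)+1)*x) * Real.cos (((m:ℕ)+1)*x))
          + B k * (Real.sin (((k:ℕ)+1)*x) * Real.cos (((m:ℕ)+1)*x))))
        = (if (k:ℕ) = (m:ℕ) then A k * π else 0) := by
      intro k
      rw [intervalIntegral.integral_add (hint _ (by fun_prop)) (hint _ (by fun_prop)),
        intervalIntegral.integral_const_mul, intervalIntegral.integral_const_mul,
        intCC, intSC]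
      split_ifs <;> ring
    rw [Finset.sum_congr rfl (fun k _ => hterm k),
      intervalIntegral.integral_const_mul, intCos1] at h0
    have hsum : ∑ k : Fin K, (if (k:ℕ) = (m:ℕ) then A k * π else 0) = A m * π := by
      simp_rw [Fin.val_eq_val]
      simp
    rw [hsum] at h0
    have hπ := Real.pi_ne_zero
    have : A m * π = 0 := by linarith
    rcases mul_eq_zero.mp this with h' | h'
    · exact h'
    · exact absurd h' hπ
  · have h0 : ∫ x in (0:ℝ)..(2*π), ((A₀ + ∑ k : Fin K,
        (A k * Real.cos (((k:ℕ)+1)*x) + B k * Real.sin (((k:ℕ)+1)*x)))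
          * Real.sin (((m:ℕ)+1)*x)) = 0 := by
      simp_rw [h]; simp
    have hpt : ∀ x : ℝ, ((A₀ + ∑ k : Fin K,
        (A k * Real.cos (((k:ℕ)+1)*x) + B k * Real.sin (((k:ℕ)+1)*x)))
          * Real.sin (((m:ℕ)+1)*x))
        = A₀ * Real.sin (((m:ℕ)+1)*x) + ∑ k : Fin K,
          (A k * (Real.sin (((m:ℕ)+1)*x) * Real.cos (((k:ℕ)+1)*x))
            + B k * (Real.sin (((k:ℕ)+1)*x) * Real.sin (((m:ℕ)+1)*x))) := by
      intro x
      rw [add_mul, Finset.sum_mul]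
      congr 1
      refine Finset.sum_congr rfl (fun k _ => by ring)
    simp_rw [hpt] at h0
    rw [intervalIntegral.integral_add (hint _ (by fun_prop)) (hint _ (by fun_prop)),
      intervalIntegral.integral_finset_sum (fun k _ => hint _ (by fun_prop))] at h0
    have hterm : ∀ k : Fin K, (∫ x in (0:ℝ)..(2*π),
        (A k * (Real.sin (((m:ℕ)+1)*x) * Real.cos (((k:ℕ)+1)*x))
          + B k * (Real.sin (((k:ℕ)+1)*x) * Real.sin (((m:ℕ)+1)*x))))
        = (if (k:ℕ) = (m:ℕ) then B k * π else 0) := by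
      intro k
      rw [intervalIntegral.integral_add (hint _ (by fun_prop)) (hint _ (by fun_prop)),
        intervalIntegral.integral_const_mul, intervalIntegral.integral_const_mul,
        intSC, intSS]
      split_ifs <;> ring
    rw [Finset.sum_congr rfl (fun k _ => hterm k),
      intervalIntegral.integral_const_mul, intSin1] at h0
    have hsum : ∑ k : Fin K, (if (k:ℕ) = (m:ℕ) then B k * π else 0) = B m * π := by
      simp_rw [Fin.val_eq_val]
      simp
    rw [hsum] at h0
    have hπ := Real.pi_ne_zero
    have : B m * π = 0 := by linarith
    rcases mul_eq_zero.mp this with h' | h'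
    · exact h'
    · exact absurd h' hπ

lemma solveLog (x₁ x₂ : ℝ) (hne : x₁ ≠ x₂) (d₁ d₂ : ℝ) :
    ∃! p : ℝ × ℝ, p.1 + p.2 * x₁ = d₁ ∧ p.1 + p.2 * x₂ = d₂ := by
  have hd : x₂ - x₁ ≠ 0 := sub_ne_zero.mpr (Ne.symm hne)
  refine ⟨(d₁ - ((d₂ - d₁)/(x₂ - x₁)) * x₁, (d₂ - d₁)/(x₂ - x₁)), ⟨by ring, by field_simp; ring⟩, ?_⟩
  rintro ⟨p, q⟩ ⟨h1, h2⟩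
  have hq : q = (d₂ - d₁)/(x₂ - x₁) := by
    field_simp
    linarith
  have hp : p = d₁ - ((d₂ - d₁)/(x₂ - x₁)) * x₁ := by
    rw [← hq]; linarith
  simp [hp, hq]

lemma solvePow (x₁ x₂ : ℝ) (h1 : 0 < x₁) (h2 : 0 < x₂) (hne : x₁ ≠ x₂) (d₁ d₂ : ℝ) :
    ∃! p : ℝ × ℝ, p.1 * x₁ + p.2 * x₁⁻¹ = d₁ ∧ p.1 * x₂ + p.2 * x₂⁻¹ = d₂ := by
  have h1' : x₁ ≠ 0 := ne_of_gt h1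
  have h2' : x₂ ≠ 0 := ne_of_gt h2
  have hd : x₁^2 - x₂^2 ≠ 0 := by
    intro h
    apply hne
    nlinarith [sq_nonneg (x₁ - x₂), sq_nonneg (x₁ + x₂)]
  set u : ℝ := (d₁*x₁ - d₂*x₂)/(x₁^2 - x₂^2) with hu
  refine ⟨(u, d₁*x₁ - u*x₁^2), ⟨by field_simp; ring, ?_⟩, ?_⟩
  · rw [hu]; field_simp; ring
  · rintro ⟨p, q⟩ ⟨e1, e2⟩
    have e1' : p * x₁^2 + q = d₁ * x₁ := by
      field_simp at e1
      nlinarith [e1]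
    have e2' : p * x₂^2 + q = d₂ * x₂ := by
      field_simp at e2
      nlinarith [e2]
    have hpu : p = u := by
      rw [hu]
      field_simp
      nlinarith [e1', e2']
    have hqu : q = d₁*x₁ - u*x₁^2 := by
      rw [← hpu]; linarith
    simp [hpu, hqu]

lemma diff_eq (K : ℕ) (a₀ a₀' : ℝ) (a a' b b' : Fin K → ℝ) (R c₀ : ℝ)
    (c s : Fin K → ℝ) (φ : ℝ) :
    airGapFin K a₀ a₀' a a' b b' R φ
      - (c₀ + ∑ k : Fin K, (c k * Real.cos (((k:ℕ)+1)*φ) + s k * Real.sin (((k:ℕ)+1)*φ)))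
    = (a₀ + a₀' * Real.log R - c₀) + ∑ k : Fin K,
       ((a k * R ^ ((k:ℕ)+1) + a' k * R ^ (-(((k:ℕ)+1):ℤ)) - c k) * Real.cos (((k:ℕ)+1)*φ)
        + (b k * R ^ ((k:ℕ)+1) + b' k * R ^ (-(((k:ℕ)+1):ℤ)) - s k) * Real.sin (((k:ℕ)+1)*φ)) := by
  have hcomb : ∑ k : Fin K,
      ((a k * R ^ ((k:ℕ)+1) + a' k * R ^ (-(((k:ℕ)+1):ℤ)) - c k) * Real.cos (((k:ℕ)+1)*φ)
        + (b k * R ^ ((k:ℕ)+1) + b' k * R ^ (-(((k:ℕ)+1):ℤ)) - s k) * Real.sin (((k:ℕ)+1)*φ))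
      = (∑ k : Fin K, Real.cos (((k:ℕ)+1)*φ) *
            (a k * R ^ ((k:ℕ)+1) + a' k * R ^ (-(((k:ℕ)+1):ℤ)))
          + ∑ k : Fin K, Real.sin (((k:ℕ)+1)*φ) *
            (b k * R ^ ((k:ℕ)+1) + b' k * R ^ (-(((k:ℕ)+1):ℤ))))
        - ∑ k : Fin K, (c k * Real.cos (((k:ℕ)+1)*φ) + s k * Real.sin (((k:ℕ)+1)*φ)) := by
    rw [← Finset.sum_add_distrib, ← Finset.sum_sub_distrib]
    exact Finset.sum_congr rfl (fun k _ => by ring)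
  rw [hcomb]
  simp only [airGapFin]
  ring

lemma match_iff (K : ℕ) (a₀ a₀' : ℝ) (a a' b b' : Fin K → ℝ) (R : ℝ)
    (c₀ : ℝ) (c s : Fin K → ℝ) :
    (∀ φ : ℝ, airGapFin K a₀ a₀' a a' b b' R φ =
      c₀ + ∑ k : Fin K, (c k * Real.cos (((k:ℕ)+1)*φ) + s k * Real.sin (((k:ℕ)+1)*φ)))
    ↔ (a₀ + a₀' * Real.log R = c₀ ∧ ∀ k : Fin K,
        (a k * R ^ ((k:ℕ)+1) + a' k * R ^ (-(((k:ℕ)+1):ℤ)) = c k ∧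
         b k * R ^ ((k:ℕ)+1) + b' k * R ^ (-(((k:ℕ)+1):ℤ)) = s k)) := by
  constructor
  · intro h
    have hz : ∀ φ : ℝ, (a₀ + a₀' * Real.log R - c₀) + ∑ k : Fin K,
        ((a k * R ^ ((k:ℕ)+1) + a' k * R ^ (-(((k:ℕ)+1):ℤ)) - c k) * Real.cos (((k:ℕ)+1)*φ)
          + (b k * R ^ ((k:ℕ)+1) + b' k * R ^ (-(((k:ℕ)+1):ℤ)) - s k) * Real.sin (((k:ℕ)+1)*φ)) = 0 := by
      intro φ
      rw [← diff_eq, h φ, sub_self]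
    obtain ⟨h0, hk⟩ := trig_zero _ _ _ hz
    refine ⟨by linarith [sub_eq_zero.mp h0], fun k => ?_⟩
    obtain ⟨hA, hB⟩ := hk k
    exact ⟨sub_eq_zero.mp hA, sub_eq_zero.mp hB⟩
  · rintro ⟨h0, hk⟩ φ
    have := diff_eq K a₀ a₀' a a' b b' R c₀ c s φ
    rw [h0, sub_self] at this
    have hsum : ∑ k : Fin K,
        ((a k * R ^ ((k:ℕ)+1) + a' k * R ^ (-(((k:ℕ)+1):ℤ)) - c k) * Real.cos (((k:ℕ)+1)*φ)
          + (b k * R ^ ((k:ℕ)+1) + b' k * R ^ (-(((k:ℕ)+1):ℤ)) - s k) * Real.sin (((k:ℕ)+1)*φ)) = 0 := by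
      refine Finset.sum_eq_zero (fun k _ => ?_)
      rw [(hk k).1, (hk k).2]
      ring
    rw [hsum] at this
    linarith [this]

lemma zpow_neg_nat' (R : ℝ) (k : ℕ) : R ^ (-(((k:ℕ)+1) : ℤ)) = (R ^ (k+1))⁻¹ := by
  rw [zpow_neg, show (((k:ℕ)+1 : ℤ)) = ((k+1 : ℕ) : ℤ) by push_cast; ring, zpow_natCast]

/-- For trigonometric-polynomial Dirichlet data of degree at most `K` on the two
interface circles, there exist unique coefficients of the air-gap ansatz
matching the data. -/
theorem airgap_dirichlet_unique_solvability
    (K : ℕ) (R₁ R₂ : ℝ) (h₁ : 0 < R₁) (h₁₂ : R₁ < R₂)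
    (c₀₁ c₀₂ : ℝ) (c₁ s₁ c₂ s₂ : Fin K → ℝ) :
    ∃! coeff : ℝ × ℝ × (Fin K → ℝ) × (Fin K → ℝ) × (Fin K → ℝ) × (Fin K → ℝ),
      (∀ φ : ℝ,
        airGapFin K coeff.1 coeff.2.1 coeff.2.2.1 coeff.2.2.2.1
            coeff.2.2.2.2.1 coeff.2.2.2.2.2 R₁ φ =
          c₀₁ + ∑ k : Fin K,
            (c₁ k * Real.cos (((k : ℕ) + 1) * φ)
              + s₁ k * Real.sin (((k : ℕ) + 1) * φ))) ∧
      (∀ φ : ℝ,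
        airGapFin K coeff.1 coeff.2.1 coeff.2.2.1 coeff.2.2.2.1
            coeff.2.2.2.2.1 coeff.2.2.2.2.2 R₂ φ =
          c₀₂ + ∑ k : Fin K,
            (c₂ k * Real.cos (((k : ℕ) + 1) * φ)
              + s₂ k * Real.sin (((k : ℕ) + 1) * φ))) := by
  have h₂ : 0 < R₂ := lt_trans h₁ h₁₂
  have hlogne : Real.log R₁ ≠ Real.log R₂ :=
    ne_of_lt (Real.log_lt_log h₁ h₁₂)
  have hpowlt : ∀ k : Fin K, R₁ ^ ((k:ℕ)+1) < R₂ ^ ((k:ℕ)+1) :=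
    fun k => pow_lt_pow_left₀ h₁₂ h₁.le (by omega)
  have hpow1 : ∀ k : Fin K, (0:ℝ) < R₁ ^ ((k:ℕ)+1) := fun k => pow_pos h₁ _
  have hpow2 : ∀ k : Fin K, (0:ℝ) < R₂ ^ ((k:ℕ)+1) := fun k => pow_pos h₂ _
  obtain ⟨p₀, hp₀, hp₀u⟩ := solveLog (Real.log R₁) (Real.log R₂) hlogne c₀₁ c₀₂
  have hca : ∀ k : Fin K, ∃! p : ℝ × ℝ,
      p.1 * R₁ ^ ((k:ℕ)+1) + p.2 * (R₁ ^ ((k:ℕ)+1))⁻¹ = c₁ k ∧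
      p.1 * R₂ ^ ((k:ℕ)+1) + p.2 * (R₂ ^ ((k:ℕ)+1))⁻¹ = c₂ k :=
    fun k => solvePow _ _ (hpow1 k) (hpow2 k) (ne_of_lt (hpowlt k)) _ _
  have hcb : ∀ k : Fin K, ∃! p : ℝ × ℝ,
      p.1 * R₁ ^ ((k:ℕ)+1) + p.2 * (R₁ ^ ((k:ℕ)+1))⁻¹ = s₁ k ∧
      p.1 * R₂ ^ ((k:ℕ)+1) + p.2 * (R₂ ^ ((k:ℕ)+1))⁻¹ = s₂ k :=
    fun k => solvePow _ _ (hpow1 k) (hpow2 k) (ne_of_lt (hpowlt k)) _ _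
  set pa : Fin K → ℝ × ℝ := fun k => Classical.choose (hca k).exists with hpa
  set pb : Fin K → ℝ × ℝ := fun k => Classical.choose (hcb k).exists with hpb
  have hpaspec : ∀ k, (pa k).1 * R₁ ^ ((k:ℕ)+1) + (pa k).2 * (R₁ ^ ((k:ℕ)+1))⁻¹ = c₁ k ∧
      (pa k).1 * R₂ ^ ((k:ℕ)+1) + (pa k).2 * (R₂ ^ ((k:ℕ)+1))⁻¹ = c₂ k :=
    fun k => Classical.choose_spec (hca k).exists
  have hpbspec : ∀ k, (pb k).1 * R₁ ^ ((k:ℕ)+1) + (pb k).2 * (R₁ ^ ((k:ℕ)+1))⁻¹ = s₁ k ∧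
      (pb k).1 * R₂ ^ ((k:ℕ)+1) + (pb k).2 * (R₂ ^ ((k:ℕ)+1))⁻¹ = s₂ k :=
    fun k => Classical.choose_spec (hcb k).exists
  refine ⟨(p₀.1, p₀.2, fun k => (pa k).1, fun k => (pa k).2,
           fun k => (pb k).1, fun k => (pb k).2), ⟨?_, ?_⟩, ?_⟩
  · rw [match_iff]
    refine ⟨hp₀.1, fun k => ?_⟩
    rw [zpow_neg_nat']
    exact ⟨(hpaspec k).1, (hpbspec k).1⟩
  · rw [match_iff]
    refine ⟨hp₀.2, fun k => ?_⟩
    rw [zpow_neg_nat']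
    exact ⟨(hpaspec k).2, (hpbspec k).2⟩
  · rintro ⟨y₀, y₀', ya, ya', yb, yb'⟩ ⟨hy1, hy2⟩
    rw [match_iff] at hy1 hy2
    simp only at hy1 hy2
    obtain ⟨hy10, hy1k⟩ := hy1
    obtain ⟨hy20, hy2k⟩ := hy2
    have h0 : (y₀, y₀') = p₀ := hp₀u (y₀, y₀') ⟨hy10, hy20⟩
    have hak : ∀ k : Fin K, (ya k, ya' k) = pa k := by
      intro k
      refine (hca k).unique ?_ (hpaspec k)
      have h1 := (hy1k k).1
      have h2 := (hy2k k).1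
      rw [zpow_neg_nat'] at h1 h2
      exact ⟨h1, h2⟩
    have hbk : ∀ k : Fin K, (yb k, yb' k) = pb k := by
      intro k
      refine (hcb k).unique ?_ (hpbspec k)
      have h1 := (hy1k k).2
      have h2 := (hy2k k).2
      rw [zpow_neg_nat'] at h1 h2
      exact ⟨h1, h2⟩
    have e0 : y₀ = p₀.1 := by rw [← h0]
    have e0' : y₀' = p₀.2 := by rw [← h0]
    refine Prod.ext e0 (Prod.ext e0' (Prod.ext ?_ (Prod.ext ?_ (Prod.ext ?_ ?_))))
    all_goals simp only
    · funext k; exact congrArg Prod.fst (hak k)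
    · funext k; exact congrArg Prod.snd (hak k)
    · funext k; exact congrArg Prod.fst (hbk k)
    · funext k; exact congrArg Prod.snd (hbk k)
end

section
/- Let K ≥ 1 be an integer, let α₀' and α_k, α_k', β_k, β_k' (1 ≤ k ≤ K) be real numbers, and let r > 0. Define B_r(φ) = (1/r)·Σ_{k=1}^K k·cos(kφ)·(β_k r^k + β_k' r^{−k}) − (1/r)·Σ_{k=1}^K k·sin(kφ)·(α_k r^k + α_k' r^{−k}) and B_φ(φ) = −α₀'/r − (1/r)·Σ_{k=1}^K k·cos(kφ)·(α_k r^k − α_k' r^{−k}) − (1/r)·Σ_{k=1}^K k·sin(kφ)·(β_k r^k − β_k' r^{−k}). Then ∫₀^{2π} B_r(φ)·B_φ(φ) dφ = (2π/r²)·Σ_{k=1}^K k²·(α_k'·β_k − α_k·β_k'). -/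
open Real MeasureTheory intervalIntegral

lemma int_cos_int (n : ℤ) (hn : n ≠ 0) : ∫ φ in (0:ℝ)..(2*π), Real.cos (n * φ) = 0 := by
  have hc : ((n:ℝ)) ≠ 0 := Int.cast_ne_zero.mpr hn
  rw [intervalIntegral.integral_comp_mul_left (fun x => Real.cos x) hc]
  simp only [mul_zero, integral_cos, Real.sin_zero, sub_zero, smul_eq_mul]
  have : (n:ℝ) * (2*π) = (2*n : ℤ) * π := by push_cast; ring
  rw [this, Real.sin_int_mul_pi, mul_zero]

lemma int_sin_int (n : ℤ) : ∫ φ in (0:ℝ)..(2*π), Real.sin (n * φ) = 0 := by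
  rcases eq_or_ne n 0 with rfl | hn
  · simp
  have hc : ((n:ℝ)) ≠ 0 := Int.cast_ne_zero.mpr hn
  rw [intervalIntegral.integral_comp_mul_left (fun x => Real.sin x) hc]
  simp only [mul_zero, integral_sin, Real.cos_zero, smul_eq_mul]
  rw [Real.cos_int_mul_two_pi, sub_self, mul_zero]

lemma ii_cos (c : ℝ) (A B : ℝ) : IntervalIntegrable (fun x => Real.cos (c*x)) volume A B :=
  (Real.continuous_cos.comp (continuous_const.mul continuous_id)).intervalIntegrable _ _

lemma ii_sin (c : ℝ) (A B : ℝ) : IntervalIntegrable (fun x => Real.sin (c*x)) volume A B :=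
  (Real.continuous_sin.comp (continuous_const.mul continuous_id)).intervalIntegrable _ _

lemma int_cc (k l : ℕ) (hk : k ≠ 0) (hl : l ≠ 0) :
    ∫ φ in (0:ℝ)..(2*π), Real.cos (k * φ) * Real.cos (l * φ)
      = if k = l then π else 0 := by
  have h1 : ∀ φ : ℝ, Real.cos (k * φ) * Real.cos (l * φ)
      = (Real.cos ((((k:ℤ)-l : ℤ)) * φ) + Real.cos ((((k:ℤ)+l : ℤ)) * φ)) / 2 := by
    intro φ
    have : (((k:ℤ)-l : ℤ) : ℝ) * φ = (k:ℝ)*φ - (l:ℝ)*φ := by push_cast; ring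
    rw [this]
    have : (((k:ℤ)+l : ℤ) : ℝ) * φ = (k:ℝ)*φ + (l:ℝ)*φ := by push_cast; ring
    rw [this, Real.cos_sub, Real.cos_add]; ring
  rw [intervalIntegral.integral_congr (fun φ _ => h1 φ), intervalIntegral.integral_div,
    intervalIntegral.integral_add
      (ii_cos _ _ _)
      (ii_cos _ _ _),
    int_cos_int ((k:ℤ)+l) (by omega)]
  rcases eq_or_ne k l with rfl | h
  · simp [Real.cos_zero, mul_comm]
  · rw [int_cos_int ((k:ℤ)-l) (by omega)]
    simp [h]

lemma int_ss (k l : ℕ) (hk : k ≠ 0) (hl : l ≠ 0) :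
    ∫ φ in (0:ℝ)..(2*π), Real.sin (k * φ) * Real.sin (l * φ)
      = if k = l then π else 0 := by
  have h1 : ∀ φ : ℝ, Real.sin (k * φ) * Real.sin (l * φ)
      = (Real.cos ((((k:ℤ)-l : ℤ)) * φ) - Real.cos ((((k:ℤ)+l : ℤ)) * φ)) / 2 := by
    intro φ
    have e1 : (((k:ℤ)-l : ℤ) : ℝ) * φ = (k:ℝ)*φ - (l:ℝ)*φ := by push_cast; ring
    have e2 : (((k:ℤ)+l : ℤ) : ℝ) * φ = (k:ℝ)*φ + (l:ℝ)*φ := by push_cast; ring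
    rw [e1, e2, Real.cos_sub, Real.cos_add]; ring
  rw [intervalIntegral.integral_congr (fun φ _ => h1 φ), intervalIntegral.integral_div,
    intervalIntegral.integral_sub
      (ii_cos _ _ _)
      (ii_cos _ _ _),
    int_cos_int ((k:ℤ)+l) (by omega)]
  rcases eq_or_ne k l with rfl | h
  · simp [Real.cos_zero, mul_comm]
  · rw [int_cos_int ((k:ℤ)-l) (by omega)]
    simp [h]

lemma int_sc (k l : ℕ) :
    ∫ φ in (0:ℝ)..(2*π), Real.sin (k * φ) * Real.cos (l * φ) = 0 := by
  have h1 : ∀ φ : ℝ, Real.sin (k * φ) * Real.cos (l * φ)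
      = (Real.sin ((((k:ℤ)+l : ℤ)) * φ) + Real.sin ((((k:ℤ)-l : ℤ)) * φ)) / 2 := by
    intro φ
    have e1 : (((k:ℤ)-l : ℤ) : ℝ) * φ = (k:ℝ)*φ - (l:ℝ)*φ := by push_cast; ring
    have e2 : (((k:ℤ)+l : ℤ) : ℝ) * φ = (k:ℝ)*φ + (l:ℝ)*φ := by push_cast; ring
    rw [e1, e2, Real.sin_sub, Real.sin_add]; ring
  rw [intervalIntegral.integral_congr (fun φ _ => h1 φ), intervalIntegral.integral_div,
    intervalIntegral.integral_add
      (ii_sin _ _ _)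
      (ii_sin _ _ _),
    int_sin_int, int_sin_int]
  norm_num

lemma key_prod (k l : ℕ) (hk : k ≠ 0) (hl : l ≠ 0) (ck sk dl el : ℝ) :
    ∫ φ in (0:ℝ)..(2*π),
      (ck * Real.cos (k*φ) + sk * Real.sin (k*φ)) *
      (dl * Real.cos (l*φ) + el * Real.sin (l*φ))
    = if k = l then (ck * dl + sk * el) * π else 0 := by
  have h4 : (fun φ : ℝ => (ck * Real.cos (k*φ) + sk * Real.sin (k*φ)) *
      (dl * Real.cos (l*φ) + el * Real.sin (l*φ)))
    = fun φ : ℝ => (ck*dl) * (Real.cos (k*φ) * Real.cos (l*φ))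
        + ((ck*el) * (Real.sin (l*φ) * Real.cos (k*φ))
        + ((sk*dl) * (Real.sin (k*φ) * Real.cos (l*φ))
        + (sk*el) * (Real.sin (k*φ) * Real.sin (l*φ)))) := by
    funext φ; ring
  have hA : IntervalIntegrable (fun φ : ℝ => (ck*dl) * (Real.cos (k*φ) * Real.cos (l*φ)))
      volume 0 (2*π) := (Continuous.intervalIntegrable (by fun_prop)) _ _
  have hB : IntervalIntegrable (fun φ : ℝ => (ck*el) * (Real.sin (l*φ) * Real.cos (k*φ)))
      volume 0 (2*π) := (Continuous.intervalIntegrable (by fun_prop)) _ _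
  have hC : IntervalIntegrable (fun φ : ℝ => (sk*dl) * (Real.sin (k*φ) * Real.cos (l*φ)))
      volume 0 (2*π) := (Continuous.intervalIntegrable (by fun_prop)) _ _
  have hD : IntervalIntegrable (fun φ : ℝ => (sk*el) * (Real.sin (k*φ) * Real.sin (l*φ)))
      volume 0 (2*π) := (Continuous.intervalIntegrable (by fun_prop)) _ _
  rw [h4, intervalIntegral.integral_add hA (hB.add (hC.add hD)),
    intervalIntegral.integral_add hB (hC.add hD),
    intervalIntegral.integral_add hC hD,
    intervalIntegral.integral_const_mul, intervalIntegral.integral_const_mul,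
    intervalIntegral.integral_const_mul, intervalIntegral.integral_const_mul,
    int_cc k l hk hl, int_ss k l hk hl, int_sc k l, int_sc l k]
  rcases eq_or_ne k l with rfl | h
  · simp; ring
  · simp [h]

lemma int_F_const (k : ℕ) (hk : k ≠ 0) (ck sk d0 : ℝ) :
    ∫ φ in (0:ℝ)..(2*π), (ck * Real.cos (k*φ) + sk * Real.sin (k*φ)) * d0 = 0 := by
  have h : (fun φ : ℝ => (ck * Real.cos (k*φ) + sk * Real.sin (k*φ)) * d0)
      = fun φ : ℝ => (ck*d0) * Real.cos (((k:ℤ):ℝ) * φ) + (sk*d0) * Real.sin (((k:ℤ):ℝ) * φ) := by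
    funext φ; push_cast; ring
  have hA : IntervalIntegrable (fun φ : ℝ => (ck*d0) * Real.cos (((k:ℤ):ℝ) * φ))
      volume 0 (2*π) := (Continuous.intervalIntegrable (by fun_prop)) _ _
  have hB : IntervalIntegrable (fun φ : ℝ => (sk*d0) * Real.sin (((k:ℤ):ℝ) * φ))
      volume 0 (2*π) := (Continuous.intervalIntegrable (by fun_prop)) _ _
  rw [h, intervalIntegral.integral_add hA hB,
    intervalIntegral.integral_const_mul, intervalIntegral.integral_const_mul,
    int_cos_int (k:ℤ) (by exact_mod_cast hk), int_sin_int (k:ℤ)]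
  ring

lemma fourier_orth (K : ℕ) (d0 : ℝ) (c s d e : ℕ → ℝ) :
    ∫ φ in (0:ℝ)..(2*π),
      (∑ k ∈ Finset.Icc 1 K, (c k * Real.cos (k*φ) + s k * Real.sin (k*φ))) *
      (d0 + ∑ k ∈ Finset.Icc 1 K, (d k * Real.cos (k*φ) + e k * Real.sin (k*φ)))
    = π * ∑ k ∈ Finset.Icc 1 K, (c k * d k + s k * e k) := by
  have hre : (fun φ : ℝ =>
      (∑ k ∈ Finset.Icc 1 K, (c k * Real.cos (k*φ) + s k * Real.sin (k*φ))) *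
      (d0 + ∑ k ∈ Finset.Icc 1 K, (d k * Real.cos (k*φ) + e k * Real.sin (k*φ))))
    = fun φ : ℝ =>
      (∑ k ∈ Finset.Icc 1 K, (c k * Real.cos (k*φ) + s k * Real.sin (k*φ)) * d0)
      + ∑ k ∈ Finset.Icc 1 K, ∑ l ∈ Finset.Icc 1 K,
          (c k * Real.cos (k*φ) + s k * Real.sin (k*φ)) *
          (d l * Real.cos (l*φ) + e l * Real.sin (l*φ)) := by
    funext φ
    rw [mul_add, Finset.sum_mul, Finset.sum_mul]
    congr 1
    exact Finset.sum_congr rfl fun k _ => Finset.mul_sum _ _ _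
  have hiA : ∀ k : ℕ, IntervalIntegrable
      (fun φ : ℝ => (c k * Real.cos (k*φ) + s k * Real.sin (k*φ)) * d0) volume 0 (2*π) :=
    fun k => (Continuous.intervalIntegrable (by fun_prop)) _ _
  have hiB : ∀ k l : ℕ, IntervalIntegrable
      (fun φ : ℝ => (c k * Real.cos (k*φ) + s k * Real.sin (k*φ)) *
        (d l * Real.cos (l*φ) + e l * Real.sin (l*φ))) volume 0 (2*π) :=
    fun k l => (Continuous.intervalIntegrable (by fun_prop)) _ _
  have hS1 : IntervalIntegrable (fun φ : ℝ =>
      ∑ k ∈ Finset.Icc 1 K, (c k * Real.cos (k*φ) + s k * Real.sin (k*φ)) * d0)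
      volume 0 (2*π) :=
    (Continuous.intervalIntegrable (continuous_finset_sum _ fun i _ => by fun_prop)) _ _
  have hS2 : IntervalIntegrable (fun φ : ℝ =>
      ∑ k ∈ Finset.Icc 1 K, ∑ l ∈ Finset.Icc 1 K,
        (c k * Real.cos (k*φ) + s k * Real.sin (k*φ)) *
        (d l * Real.cos (l*φ) + e l * Real.sin (l*φ))) volume 0 (2*π) :=
    (Continuous.intervalIntegrable
      (continuous_finset_sum _ fun i _ => continuous_finset_sum _ fun j _ => by fun_prop)) _ _
  rw [hre, intervalIntegral.integral_add hS1 hS2,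
    intervalIntegral.integral_finset_sum (fun k _ => hiA k),
    intervalIntegral.integral_finset_sum
      (fun k _ => (Continuous.intervalIntegrable
        (continuous_finset_sum _ fun j _ => by fun_prop : Continuous _) _ _)),
    ]
  have h1 : ∀ k ∈ Finset.Icc 1 K,
      (∫ φ in (0:ℝ)..(2*π), (c k * Real.cos (k*φ) + s k * Real.sin (k*φ)) * d0) = 0 :=
    fun k hk => int_F_const k (by simp at hk; omega) _ _ _
  rw [Finset.sum_congr rfl h1, Finset.sum_const, smul_zero, zero_add]
  have h2 : ∀ k ∈ Finset.Icc 1 K,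
      (∫ φ in (0:ℝ)..(2*π), ∑ l ∈ Finset.Icc 1 K,
        (c k * Real.cos (k*φ) + s k * Real.sin (k*φ)) *
        (d l * Real.cos (l*φ) + e l * Real.sin (l*φ)))
      = π * (c k * d k + s k * e k) := by
    intro k hk
    rw [intervalIntegral.integral_finset_sum (fun l _ => hiB k l)]
    have hk' : k ≠ 0 := by simp at hk; omega
    have : ∀ l ∈ Finset.Icc 1 K,
        (∫ φ in (0:ℝ)..(2*π), (c k * Real.cos (k*φ) + s k * Real.sin (k*φ)) *
          (d l * Real.cos (l*φ) + e l * Real.sin (l*φ)))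
        = if k = l then (c k * d l + s k * e l) * π else 0 :=
      fun l hl => key_prod k l hk' (by simp at hl; omega) _ _ _ _
    rw [Finset.sum_congr rfl this, Finset.sum_ite_eq (Finset.Icc 1 K) k
      (fun l => (c k * d l + s k * e l) * π), if_pos hk]
    ring
  rw [Finset.sum_congr rfl h2, ← Finset.mul_sum]


/-- Closed form for the integral of `B_r · B_φ` over one full circle in the
air-gap, yielding the modal torque formula. -/
theorem airgap_torque_integral (K : ℕ) (hK : 1 ≤ K)
    (a₀' : ℝ) (a a' b b' : ℕ → ℝ) (r : ℝ) (hr : 0 < r)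
    (Br Bphi : ℝ → ℝ)
    (hBr : ∀ φ : ℝ, Br φ =
      (1 / r) * ∑ k ∈ Finset.Icc 1 K,
          (k : ℝ) * Real.cos (k * φ) * (b k * r ^ k + b' k * r ^ (-(k : ℤ)))
      - (1 / r) * ∑ k ∈ Finset.Icc 1 K,
          (k : ℝ) * Real.sin (k * φ) * (a k * r ^ k + a' k * r ^ (-(k : ℤ))))
    (hBphi : ∀ φ : ℝ, Bphi φ =
      -(a₀' / r)
      - (1 / r) * ∑ k ∈ Finset.Icc 1 K,
          (k : ℝ) * Real.cos (k * φ) * (a k * r ^ k - a' k * r ^ (-(k : ℤ)))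
      - (1 / r) * ∑ k ∈ Finset.Icc 1 K,
          (k : ℝ) * Real.sin (k * φ) * (b k * r ^ k - b' k * r ^ (-(k : ℤ)))) :
    ∫ φ in (0:ℝ)..(2 * π), Br φ * Bphi φ =
      (2 * π / r ^ 2) * ∑ k ∈ Finset.Icc 1 K,
        (k : ℝ) ^ 2 * (a' k * b k - a k * b' k) := by
  have hr0 : r ≠ 0 := ne_of_gt hr
  have hcong : ∀ φ ∈ Set.uIcc (0:ℝ) (2*π), Br φ * Bphi φ =
      (∑ k ∈ Finset.Icc 1 K,
        (((k:ℝ) * (b k * r ^ k + b' k * r ^ (-(k:ℤ))) / r) * Real.cos (k*φ)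
          + (-((k:ℝ) * (a k * r ^ k + a' k * r ^ (-(k:ℤ))) / r)) * Real.sin (k*φ))) *
      ((-(a₀'/r)) + ∑ k ∈ Finset.Icc 1 K,
        ((-((k:ℝ) * (a k * r ^ k - a' k * r ^ (-(k:ℤ))) / r)) * Real.cos (k*φ)
          + (-((k:ℝ) * (b k * r ^ k - b' k * r ^ (-(k:ℤ))) / r)) * Real.sin (k*φ))) := by
    intro φ _
    rw [hBr φ, hBphi φ]
    congr 1
    · rw [Finset.mul_sum, Finset.mul_sum, ← Finset.sum_sub_distrib]
      exact Finset.sum_congr rfl fun k _ => by ring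
    · rw [sub_sub, sub_eq_add_neg, Finset.mul_sum, Finset.mul_sum,
        ← Finset.sum_add_distrib, ← Finset.sum_neg_distrib]
      congr 1
      exact Finset.sum_congr rfl fun k _ => by ring
  rw [intervalIntegral.integral_congr hcong, fourier_orth, Finset.mul_sum, Finset.mul_sum]
  refine Finset.sum_congr rfl fun k _ => ?_
  have hky : r ^ (-(k:ℤ)) = (r ^ k)⁻¹ := by rw [zpow_neg, zpow_natCast]
  have hpk : r ^ k ≠ 0 := pow_ne_zero _ hr0
  rw [hky]
  field_simp
  ring
end
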